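/- arXiv:1907.10836 — 3 statements merged into one kernel-verified Lean document; each statement's English description precedes it below -/
import Mathlib

section
/- Let w = u₁u₂⋯u_l be an FPF-involution word with l ≥ 2, write u₁ = a. If u₂ = a+1, then the word obtained by replacing u₂ = a+1 with a-1, i.e., a(a-1)u₃⋯u_l, is also an FPF-involution word for the same element z. (This is the relation i₁(i₁+1)⋯ ∼ i₁(i₁-1)⋯ for i₁ ≥ 2 in the FPF-equivalence.) -/
/-- The function underlying the permutation `Θ = (12)(34)(56)⋯` on positive integers
(fixing `0`). -/
def thetaFun (n : ℕ) : ℕ :=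
  if n = 0 then 0 else if n % 2 = 1 then n + 1 else n - 1

lemma thetaFun_involutive : Function.Involutive thetaFun := by
  intro n
  by_cases h0 : n = 0
  · simp [thetaFun, h0]
  · by_cases h1 : n % 2 = 1
    · have e1 : thetaFun n = n + 1 := by simp [thetaFun, h0, h1]
      have h2 : ¬ ((n + 1) % 2 = 1) := by omega
      have h3 : ¬ (n + 1 = 0) := by omega
      rw [e1]
      simp only [thetaFun, if_neg h3, if_neg h2]
      omega
    · have e1 : thetaFun n = n - 1 := by simp [thetaFun, h0, h1]
      have h2 : (n - 1) % 2 = 1 := by omega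
      have h3 : ¬ (n - 1 = 0) := by omega
      rw [e1]
      simp only [thetaFun, if_neg h3, if_pos h2]
      omega

/-- The fixed-point-free involution `Θ = (12)(34)(56)⋯`. -/
def theta : Equiv.Perm ℕ := Function.Involutive.toPerm thetaFun thetaFun_involutive

/-- The simple transposition `s_i = (i, i+1)`. -/
def sPerm (i : ℕ) : Equiv.Perm ℕ := Equiv.swap i (i + 1)

/-- For a word `w = i₁i₂⋯i_l`, the permutation `s_{i_l}⋯s_{i₁} Θ s_{i₁}⋯s_{i_l}`. -/
def heckeConj (w : List ℕ) : Equiv.Perm ℕ :=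
  ((w.map sPerm).reverse).prod * theta * (w.map sPerm).prod

/-- `w` is a symplectic Hecke word for `z`, i.e. a word of positive letters with
`z = s_{i_l}⋯s_{i₁} Θ s_{i₁}⋯s_{i_l}`. -/
def SympHecke (z : Equiv.Perm ℕ) (w : List ℕ) : Prop :=
  (∀ i ∈ w, 1 ≤ i) ∧ z = heckeConj w

/-- `z` belongs to `F_∞`, the conjugacy set `{π⁻¹ Θ π : π ∈ S_∞}`. -/
def InFinf (z : Equiv.Perm ℕ) : Prop := ∃ w : List ℕ, SympHecke z w

/-- `w` is an FPF-involution word for `z`: a symplectic Hecke word for `z` of minimal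
length among all symplectic Hecke words for `z`. -/
def IsFPFWordFor (z : Equiv.Perm ℕ) (w : List ℕ) : Prop :=
  SympHecke z w ∧ ∀ w' : List ℕ, SympHecke z w' → w.length ≤ w'.length

/-- `w` is an FPF-involution word (for the element it determines). -/
def IsFPFWord (w : List ℕ) : Prop := IsFPFWordFor (heckeConj w) w

/-!
For odd `i` the transposition `s_i` swaps a pair of `Θ`, so `s_i Θ s_i = Θ`; hence a minimal word
cannot begin with an odd letter, and `a` is even with `a - 1`, `a + 1` odd. Absorbing these odd
letters into `Θ` and using the braid relations,
`s_{a+1} s_a Θ s_a s_{a+1} = τ' Θ τ'` and `s_{a-1} s_a Θ s_a s_{a-1} = τ Θ τ`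
with `τ = (a-1, a+1)` and `τ' = (a, a+2) = Θ τ Θ`. Since `τ` and `τ'` are disjoint they commute,
which forces `τ Θ τ = τ' Θ τ'`. So both words have the same length and give the same element.
-/

open Equiv

lemma theta_inv : theta⁻¹ = theta :=
  Function.Involutive.toPerm_symm thetaFun_involutive

lemma theta_mul_self : theta * theta = 1 := by
  simpa only [theta_inv] using mul_inv_cancel theta

lemma theta_apply_of_odd {i : ℕ} (hi : Odd i) : theta i = i + 1 := by
  simp [theta, thetaFun, hi.pos.ne', Nat.odd_iff.mp hi]

lemma theta_succ_of_odd {i : ℕ} (hi : Odd i) : theta (i + 1) = i := by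
  rw [← theta_apply_of_odd hi, ← Perm.mul_apply, theta_mul_self, Perm.one_apply]

lemma theta_mul_swap_mul_theta (x y : ℕ) :
    theta * swap x y * theta = swap (theta x) (theta y) := by
  rw [swap_apply_apply, theta_inv]

lemma sPerm_mul_self (i : ℕ) : sPerm i * sPerm i = 1 := swap_mul_self i (i + 1)

lemma sPerm_succ_mul_sPerm_mul_sPerm_succ (i : ℕ) :
    sPerm (i + 1) * sPerm i * sPerm (i + 1) = swap i (i + 2) := by
  rw [sPerm, sPerm, swap_mul_swap_mul_swap (by omega) (by omega), swap_comm]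

lemma sPerm_mul_sPerm_succ_mul_sPerm (i : ℕ) :
    sPerm i * sPerm (i + 1) * sPerm i = swap i (i + 2) := by
  rw [sPerm, sPerm, swap_comm i, swap_comm (i + 1) (i + 1 + 1),
    swap_mul_swap_mul_swap (by omega) (by omega)]

lemma conj_mul_mul_eq_of_commute {G : Type*} [Group G] {θ t : G} (hθ : θ * θ = 1)
    (h : Commute t (θ * t * θ)) : θ * t * θ * θ * (θ * t * θ) = t * θ * t := by
  have h' : t * θ * t * θ = θ * t * θ * t := by simpa only [mul_assoc] using h.eq
  calc θ * t * θ * θ * (θ * t * θ) = θ * t * θ * t * θ := by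
        simp only [← mul_assoc]
        rw [mul_assoc (θ * t) θ θ, hθ, mul_one]
    _ = t * θ * t := by rw [← h', mul_assoc _ θ θ, hθ, mul_one]

lemma sPerm_mul_theta_mul_sPerm_of_odd {i : ℕ} (hi : Odd i) :
    sPerm i * theta * sPerm i = theta := by
  have hfix : theta * sPerm i * theta = sPerm i := by
    rw [sPerm, theta_mul_swap_mul_theta, theta_apply_of_odd hi, theta_succ_of_odd hi, swap_comm]
  calc sPerm i * theta * sPerm i = theta * sPerm i * theta * theta * sPerm i := by rw [hfix]
    _ = theta := by
      rw [mul_assoc _ theta theta, theta_mul_self, mul_one, mul_assoc, sPerm_mul_self, mul_one]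

lemma heckeConj_pair (x y : ℕ) :
    heckeConj [x, y] = sPerm y * sPerm x * theta * sPerm x * sPerm y := by
  simp [heckeConj, mul_assoc]

lemma heckeConj_pair_succ_eq_pred {i : ℕ} (hi : Odd i) :
    heckeConj [i + 1, i + 1 + 1] = heckeConj [i + 1, i] := by
  have hi2 : Odd (i + 1 + 1) := by simpa [Nat.odd_add] using hi
  have hL :
      heckeConj [i + 1, i + 1 + 1] = swap (i + 1) (i + 3) * theta * swap (i + 1) (i + 3) := by
    rw [heckeConj_pair, ← sPerm_succ_mul_sPerm_mul_sPerm_succ (i + 1)]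
    nth_rewrite 1 [← sPerm_mul_theta_mul_sPerm_of_odd hi2]
    simp only [mul_assoc]
  have hR : heckeConj [i + 1, i] = swap i (i + 2) * theta * swap i (i + 2) := by
    rw [heckeConj_pair, ← sPerm_mul_sPerm_succ_mul_sPerm i]
    nth_rewrite 1 [← sPerm_mul_theta_mul_sPerm_of_odd hi]
    simp only [mul_assoc]
  have hconj : theta * swap i (i + 2) * theta = swap (i + 1) (i + 3) := by
    rw [theta_mul_swap_mul_theta, theta_apply_of_odd hi, theta_apply_of_odd hi2]
  have hcomm : Commute (swap i (i + 2)) (swap (i + 1) (i + 3)) :=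
    (Perm.disjoint_swap_swap (by simp)).commute
  rw [hL, hR, ← hconj, conj_mul_mul_eq_of_commute theta_mul_self (hconj ▸ hcomm)]

lemma heckeConj_append (u w : List ℕ) :
    heckeConj (u ++ w) = (w.map sPerm).reverse.prod * heckeConj u * (w.map sPerm).prod := by
  simp [heckeConj, mul_assoc]

lemma heckeConj_append_congr {u v : List ℕ} (h : heckeConj u = heckeConj v) (w : List ℕ) :
    heckeConj (u ++ w) = heckeConj (v ++ w) := by
  rw [heckeConj_append, heckeConj_append, h]

lemma heckeConj_singleton_of_odd {i : ℕ} (hi : Odd i) : heckeConj [i] = heckeConj [] := by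
  simpa [heckeConj, mul_assoc] using sPerm_mul_theta_mul_sPerm_of_odd hi

lemma IsFPFWordFor.even_head {z : Perm ℕ} {a : ℕ} {w : List ℕ} (h : IsFPFWordFor z (a :: w)) :
    Even a := by
  obtain ⟨⟨hpos, hz⟩, hmin⟩ := h
  by_contra hodd
  have hdrop : heckeConj (a :: w) = heckeConj w :=
    heckeConj_append_congr (heckeConj_singleton_of_odd (Nat.not_even_iff_odd.mp hodd)) w
  have := hmin w ⟨fun i hi ↦ hpos i (List.mem_cons_of_mem a hi), hz.trans hdrop⟩
  simp at this

lemma IsFPFWordFor.of_heckeConj_eq {z : Perm ℕ} {w w' : List ℕ} (h : IsFPFWordFor z w)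
    (hpos : ∀ i ∈ w', 1 ≤ i) (hlen : w'.length = w.length) (heq : heckeConj w' = heckeConj w) :
    IsFPFWordFor z w' :=
  ⟨⟨hpos, h.1.2.trans heq.symm⟩, fun v hv ↦ hlen ▸ h.2 v hv⟩

theorem fpf_initial_letter_relation_general (z : Equiv.Perm ℕ) (a : ℕ) (rest : List ℕ)
    (h : IsFPFWordFor z (a :: (a + 1) :: rest)) :
    IsFPFWordFor z (a :: (a - 1) :: rest) := by
  obtain ⟨i, hi, rfl⟩ : ∃ i, Odd i ∧ a = i + 1 := by
    have ha : 1 ≤ a := h.1.1 a List.mem_cons_self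
    obtain ⟨m, hm⟩ := h.even_head
    exact ⟨a - 1, ⟨m - 1, by omega⟩, by omega⟩
  rw [Nat.add_sub_cancel]
  refine h.of_heckeConj_eq ?_ rfl
    (heckeConj_append_congr (heckeConj_pair_succ_eq_pred hi).symm rest)
  intro j hj
  simp only [List.mem_cons] at hj
  rcases hj with rfl | rfl | hj
  · omega
  · exact hi.pos
  · exact h.1.1 j (by simp [hj])

/-- If `a(a+1)u₃⋯u_l` is an FPF-involution word for `z` with `a ≥ 2`, then
`a(a-1)u₃⋯u_l` is also an FPF-involution word for `z`. -/
theorem fpf_initial_letter_relation (z : Equiv.Perm ℕ) (a : ℕ) (rest : List ℕ)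
    (ha : 2 ≤ a) (h : IsFPFWordFor z (a :: (a + 1) :: rest)) :
    IsFPFWordFor z (a :: (a - 1) :: rest) :=
  fpf_initial_letter_relation_general z a rest h
end

section
/- Let w¹w²⋯wᵐ ∈ RF^m_FPF(z) with |w¹| ≥ 2, |w²| ≠ 0, w¹ = u₁u₂⋯. If u₂ > u₁ + 1 and u₁ < min(cont(w²)), then the factorization w̃¹w̃²w³⋯wᵐ with cont(w̃¹) = cont(w¹)\{u₁} and cont(w̃²) = cont(w²) ∪ {u₁} is again an element of RF^m_FPF(z), and the concatenated words w¹w²⋯wᵐ and w̃¹w̃²w³⋯wᵐ are equivalent FPF-involution words (related by commutation moves only). -/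
/-- A single Coxeter-Knuth move on three consecutive letters. -/
inductive CKStep : List ℕ → List ℕ → Prop
  | braid (u v : List ℕ) (a : ℕ) :
      CKStep (u ++ (a+1) :: a :: (a+1) :: v) (u ++ a :: (a+1) :: a :: v)
  | bac (u v : List ℕ) (a b c : ℕ) : a < b → b < c →
      CKStep (u ++ b :: a :: c :: v) (u ++ b :: c :: a :: v)
  | acb (u v : List ℕ) (a b c : ℕ) : a < b → b < c →
      CKStep (u ++ a :: c :: b :: v) (u ++ c :: a :: b :: v)

/-- Coxeter-Knuth equivalence: finite sequences of Coxeter-Knuth moves. -/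
def CKEquiv : List ℕ → List ℕ → Prop := Relation.EqvGen CKStep

/-- A single commutation move `⋯ab⋯ ∼ ⋯ba⋯` with `|a-b| > 1`. -/
inductive CommStep : List ℕ → List ℕ → Prop
  | comm (u v : List ℕ) (a b : ℕ) : a + 1 < b ∨ b + 1 < a →
      CommStep (u ++ a :: b :: v) (u ++ b :: a :: v)

/-- Equivalence generated by commutation moves only. -/
def CommEquiv : List ℕ → List ℕ → Prop := Relation.EqvGen CommStep

/-- A single move generating the equivalence `∼_Sp` on FPF-involution words:
commutations, braid moves, and the initial-letter relation `a(a-1)⋯ ∼ a(a+1)⋯`. -/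
inductive SpStep : List ℕ → List ℕ → Prop
  | comm (u v : List ℕ) (a b : ℕ) : a + 1 < b ∨ b + 1 < a →
      SpStep (u ++ a :: b :: v) (u ++ b :: a :: v)
  | braid (u v : List ℕ) (a : ℕ) :
      SpStep (u ++ a :: (a+1) :: a :: v) (u ++ (a+1) :: a :: (a+1) :: v)
  | initial (v : List ℕ) (a : ℕ) : 2 ≤ a →
      SpStep (a :: (a-1) :: v) (a :: (a+1) :: v)

/-- The equivalence `∼_Sp`. -/
def SpEquiv : List ℕ → List ℕ → Prop := Relation.EqvGen SpStep
/-- Remove from the (increasing) list `A` the smallest element exceeding `b`,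
if any; this pairs `b` with that element. -/
def removeSmallestAbove (b : ℕ) : List ℕ → List ℕ
  | [] => []
  | a :: t => if b < a then t else a :: removeSmallestAbove b t

/-- The unpaired letters of `A` in the Morse–Schilling `A·B`-pairing: letters of `B`
are processed in decreasing order (B is increasing, `foldr` starts with its last
letter), each pairing with the smallest yet-unpaired letter of `A` above it. -/
def unpairedL (A B : List ℕ) : List ℕ :=
  B.foldr (fun b acc => removeSmallestAbove b acc) A

/-- The Morse–Schilling crystal lowering operator `f̃ᵢ` (here `i` is 0-indexed, acting
on blocks `i` and `i+1`) on an increasing factorization. -/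
def fMS (i : ℕ) (F : List (List ℕ)) : Option (List (List ℕ)) :=
  let A := F.getD i []
  let B := F.getD (i + 1) []
  match (unpairedL A B).getLast? with
  | none => none
  | some c =>
      let s := ((List.range (A.length + 1)).filter
        (fun j => decide ((c + j + 1) ∉ A))).headD 0
      some ((F.set i (A.erase c)).set (i + 1) (List.orderedInsert (· ≤ ·) (c + s) B))

/-- Two factorizations are related by a single Morse–Schilling crystal operator. -/
def MSRel (F G : List (List ℕ)) : Prop := ∃ i, i + 1 < F.length ∧ fMS i F = some G

/-- Two factorizations lie in the same connected component of the `gl(m)`-crystal: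
one is obtained from the other by a finite sequence of operators `f̃ᵢ, ẽᵢ`. -/
def MSConnected : List (List ℕ) → List (List ℕ) → Prop := Relation.EqvGen MSRel

/-- `F` is an increasing factorization of an FPF-involution word for `z`, i.e. an
element of `RF_FPF^m(z)` with `m = F.length` blocks. -/
def IsIncFact (z : Equiv.Perm ℕ) (F : List (List ℕ)) : Prop :=
  (∀ b ∈ F, List.Chain' (· < ·) b) ∧ IsFPFWordFor z F.flatten


/-! Because `w¹` is increasing and `u₁ + 1 < u₂`, the letter `u₁` differs by more than one from
every later letter of `w¹`, so it commutes step by step past `u₂ ⋯` into the front of `w²`.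
Commutations change neither the multiset of letters nor the conjugate
`s_{i_l}⋯s_{i₁} Θ s_{i₁}⋯s_{i_l}`, so the length-minimality defining FPF-involution words
transfers, and `u₁ :: w²` stays increasing because `u₁ < min(cont(w²))`. -/

lemma sPerm_commute {a b : ℕ} (h : a + 1 < b ∨ b + 1 < a) : Commute (sPerm a) (sPerm b) := by
  ext x
  simp only [sPerm, Equiv.Perm.mul_apply, Equiv.swap_apply_def]
  split_ifs <;> omega

namespace CommStep

lemma reverse {x y : List ℕ} (h : CommStep x y) : CommStep x.reverse y.reverse := by
  obtain ⟨u, v, a, b, hab⟩ := h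
  simpa using CommStep.comm v.reverse u.reverse b a hab.symm

lemma append_left {x y : List ℕ} (h : CommStep x y) (p : List ℕ) : CommStep (p ++ x) (p ++ y) := by
  obtain ⟨u, v, a, b, hab⟩ := h
  simpa using CommStep.comm (p ++ u) v a b hab

lemma perm {x y : List ℕ} (h : CommStep x y) : x.Perm y := by
  obtain ⟨u, v, a, b, -⟩ := h
  exact (List.Perm.swap b a v).append_left u

lemma prod_map_sPerm {x y : List ℕ} (h : CommStep x y) :
    (x.map sPerm).prod = (y.map sPerm).prod := by
  obtain ⟨u, v, a, b, hab⟩ := h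
  simp only [List.map_append, List.map_cons, List.prod_append, List.prod_cons,
    (sPerm_commute hab).left_comm]

lemma heckeConj_eq {x y : List ℕ} (h : CommStep x y) : heckeConj x = heckeConj y := by
  simp only [heckeConj, ← List.map_reverse, h.prod_map_sPerm, h.reverse.prod_map_sPerm]

end CommStep

namespace CommEquiv

lemma perm {x y : List ℕ} (h : CommEquiv x y) : x.Perm y := by
  induction h with
  | rel _ _ h => exact h.perm
  | refl => rfl
  | symm _ _ _ ih => exact ih.symm
  | trans _ _ _ _ _ ih₁ ih₂ => exact ih₁.trans ih₂

lemma heckeConj_eq {x y : List ℕ} (h : CommEquiv x y) : heckeConj x = heckeConj y := by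
  induction h with
  | rel _ _ h => exact h.heckeConj_eq
  | refl => rfl
  | symm _ _ _ ih => exact ih.symm
  | trans _ _ _ _ _ ih₁ ih₂ => exact ih₁.trans ih₂

lemma append_left {x y : List ℕ} (h : CommEquiv x y) (p : List ℕ) :
    CommEquiv (p ++ x) (p ++ y) := by
  induction h with
  | rel _ _ h => exact .rel _ _ (h.append_left p)
  | refl => exact .refl _
  | symm _ _ _ ih => exact ih.symm
  | trans _ _ _ _ _ ih₁ ih₂ => exact ih₁.trans _ _ _ ih₂

lemma cons_append_of_forall_lt {c : ℕ} {L : List ℕ} (hL : ∀ a ∈ L, c + 1 < a) (r : List ℕ) :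
    CommEquiv (c :: (L ++ r)) (L ++ c :: r) := by
  induction L with
  | nil => exact Relation.EqvGen.refl _
  | cons a L ih =>
    refine Relation.EqvGen.trans _ (a :: c :: (L ++ r)) _ ?_ ?_
    · exact .rel _ _ (.comm [] (L ++ r) c a (.inl (hL a List.mem_cons_self)))
    · exact (ih fun b hb => hL b (List.mem_cons_of_mem a hb)).append_left [a]

end CommEquiv

lemma IsFPFWordFor.of_commEquiv {z : Equiv.Perm ℕ} {x y : List ℕ} (hx : IsFPFWordFor z x)
    (h : CommEquiv x y) : IsFPFWordFor z y := by
  obtain ⟨⟨hpos, hz⟩, hmin⟩ := hx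
  refine ⟨⟨fun i hi => hpos i (h.perm.mem_iff.mpr hi), hz.trans h.heckeConj_eq⟩, fun w hw => ?_⟩
  rw [← h.perm.length_eq]
  exact hmin w hw

theorem odd_lowering_generic_case_general (z : Equiv.Perm ℕ) (u₁ u₂ : ℕ)
    (t w₂ : List ℕ) (rest : List (List ℕ))
    (hF : IsIncFact z ((u₁ :: u₂ :: t) :: w₂ :: rest))
    (hgap : u₁ + 1 < u₂) (hmin : ∀ v ∈ w₂, u₁ < v) :
    IsIncFact z ((u₂ :: t) :: (u₁ :: w₂) :: rest) ∧
    CommEquiv ((u₁ :: u₂ :: t) :: w₂ :: rest).flatten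
      ((u₂ :: t) :: (u₁ :: w₂) :: rest).flatten := by
  obtain ⟨hinc, hword⟩ := hF
  have hw₁ : List.IsChain (· < ·) (u₁ :: u₂ :: t) := hinc _ List.mem_cons_self
  have hfar : ∀ a ∈ u₂ :: t, u₁ + 1 < a := by
    have hu₂ : ∀ a ∈ t, u₂ < a := fun _ ha =>
      List.rel_of_pairwise_cons (List.isChain_iff_pairwise.mp hw₁.tail) ha
    rintro a (_ | ⟨_, ha⟩)
    · exact hgap
    · exact hgap.trans (hu₂ a ha)
  have hcomm : CommEquiv ((u₁ :: u₂ :: t) :: w₂ :: rest).flatten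
      ((u₂ :: t) :: (u₁ :: w₂) :: rest).flatten := by
    simpa using CommEquiv.cons_append_of_forall_lt hfar (w₂ ++ rest.flatten)
  refine ⟨⟨?_, hword.of_commEquiv hcomm⟩, hcomm⟩
  rintro b (_ | ⟨_, _ | ⟨_, hb⟩⟩)
  · exact hw₁.tail
  · exact List.isChain_cons.mpr ⟨fun v hv => hmin v (List.mem_of_mem_head? hv),
      hinc _ (by simp)⟩
  · exact hinc b (.tail _ (.tail _ hb))

/-- If `w¹ = u₁u₂⋯` with `u₂ > u₁ + 1` and `u₁ < min(cont(w²))`, then moving `u₁` from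
the first block to the front of the second block gives another element of
`RF_FPF^m(z)`, whose concatenation is related to the original one by commutation moves
only. -/
theorem odd_lowering_generic_case (z : Equiv.Perm ℕ) (u₁ u₂ : ℕ)
    (t w₂ : List ℕ) (rest : List (List ℕ))
    (hF : IsIncFact z ((u₁ :: u₂ :: t) :: w₂ :: rest))
    (hw₂ : w₂ ≠ []) (hgap : u₁ + 1 < u₂) (hmin : ∀ v ∈ w₂, u₁ < v) :
    IsIncFact z ((u₂ :: t) :: (u₁ :: w₂) :: rest) ∧
    CommEquiv ((u₁ :: u₂ :: t) :: w₂ :: rest).flatten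
      ((u₂ :: t) :: (u₁ :: w₂) :: rest).flatten :=
  odd_lowering_generic_case_general z u₁ u₂ t w₂ rest hF hgap hmin
end

section
/- The odd lowering operator f̃₁' on primed tableaux is well-defined and partially inverse to the odd raising operator ẽ₁': for primed tableaux S, T ∈ PT_m(λ), f̃₁'(T) = S (with S ≠ 0) if and only if ẽ₁'(S) = T, where ẽ₁' changes T_{(1,1)} = 2 to 1, or the unique T_{(1,i)} = 2' (i ≥ 2) to 1, and f̃₁' changes the rightmost 1 in the first row at position (1,i) to 2 (if i = 1) or 2' (if i ≥ 2) provided the entry at (1,i+1) is not 2'. -/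
/-- A primed tableau, as a list of rows; an entry `(v, true)` denotes the primed
letter `v′` and `(v, false)` the unprimed letter `v`; row `i` (0-indexed) implicitly
occupies absolute columns `i, i+1, …`. -/
abbrev PrimedTab := List (List (ℕ × Bool))

/-- The linear order `1′ < 1 < 2′ < 2 < ⋯` on primed letters, via a numeric key. -/
def pKey (x : ℕ × Bool) : ℕ := 2 * x.1 - (if x.2 then 1 else 0)

/-- `Q` is a primed tableau (semistandard marked shifted tableau) with entries among
`1′ < 1 < ⋯ < m′ < m`: shifted shape of a strict partition, rows and columns weakly
increasing, at most one `i′` per row, at most one `i` per column, no primed letters on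
the main diagonal. -/
def IsPrimedTab (m : ℕ) (Q : PrimedTab) : Prop :=
  (∀ r ∈ Q, r ≠ []) ∧
  List.Chain' (fun r s : List (ℕ × Bool) => s.length < r.length) Q ∧
  (∀ r ∈ Q, ∀ x ∈ r, 1 ≤ x.1 ∧ x.1 ≤ m) ∧
  (∀ r ∈ Q, List.Chain' (fun x y => pKey x ≤ pKey y) r) ∧
  (∀ i k x y, (Q.getD (i+1) [])[k]? = some x →
      (Q.getD i [])[k+1]? = some y → pKey y ≤ pKey x) ∧
  (∀ r ∈ Q, ∀ v : ℕ, (r.filter (fun x => decide (x = (v, true)))).length ≤ 1) ∧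
  (∀ c r r' v, r < r' → r' ≤ c →
      (Q.getD r [])[c - r]? = some (v, false) →
      (Q.getD r' [])[c - r']? = some (v, false) → False) ∧
  (∀ r x, (Q.getD r [])[0]? = some x → x.2 = false)

/-- The boxes of a primed tableau: triples (row, absolute column, entry). -/
def pBoxes (Q : PrimedTab) : List (ℕ × ℕ × ℕ × Bool) :=
  ((Q.zipIdx.map Prod.swap).map (fun p => (p.2.zipIdx.map Prod.swap).map (fun q => (p.1, p.1 + q.1, q.2)))).flatten

/-- The reading order used by standardization: boxes with smaller entries come first;
among equal primed entries `i′`, boxes are read top to bottom (by row); among equal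
unprimed entries `i`, boxes are read left to right (by column). -/
def earlierB (a b : ℕ × ℕ × ℕ × Bool) : Bool :=
  decide (pKey a.2.2 < pKey b.2.2) ||
    (decide (a.2.2 = b.2.2) &&
      (if b.2.2.2 then decide (a.1 < b.1) else decide (a.2.1 < b.2.1)))

/-- The standardization `st(Q)` of a primed tableau: each box receives as value one
plus the number of boxes preceding it in the reading order, keeping its primed flag. -/
def standardize (Q : PrimedTab) : PrimedTab :=
  (Q.zipIdx.map Prod.swap).map (fun p => (p.2.zipIdx.map Prod.swap).map (fun q =>
    (((pBoxes Q).filter (fun bx => earlierB bx (p.1, p.1 + q.1, q.2))).length + 1,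
      q.2.2)))

/-- A standard primed tableau with `n` boxes: a primed tableau in which each of
`1, …, n` appears exactly once (primed or unprimed). -/
def IsStandardPrimedTab (n : ℕ) (Q : PrimedTab) : Prop :=
  IsPrimedTab n Q ∧ (Q.flatten.map Prod.fst).Perm ((List.range n).map (· + 1))

/-- The odd raising operator `ẽ₁′` on primed tableaux: change `T_{(1,1)} = 2` to `1`,
or the (unique) `2′` in the first row to `1`; otherwise `0`. -/
def eOdd (T : PrimedTab) : Option PrimedTab :=
  let r := T.getD 0 []
  if r[0]? = some (2, false) then some (T.set 0 (r.set 0 (1, false)))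
  else if (2, true) ∈ r then
    some (T.set 0 (r.set (r.idxOf (2, true)) (1, false)))
  else none

/-- The odd lowering operator `f̃₁′` on primed tableaux: change the rightmost `1` in
the first row, at position `(1, i)`, to `2` if `i = 1` and to `2′` if `i ≥ 2`,
provided the entry immediately to its right is not `2′`; otherwise `0`. -/
def fOdd (T : PrimedTab) : Option PrimedTab :=
  let r := T.getD 0 []
  if (1, false) ∈ r then
    let i := r.length - 1 - r.reverse.idxOf (1, false)
    if r[i + 1]? = some (2, true) then none
    else some (T.set 0 (r.set i (if i = 0 then (2, false) else (2, true))))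
  else none

/-! Both operators act at a position `i` of the first row such that every entry to the left of
`i` is at most `1` and every entry to the right of `i` is at least `2` (`IsOneTwoBoundary`).
For `f̃₁′` this is the rightmost `1`, since the entry after it is neither `1` nor `2′`; for
`ẽ₁′` it is the diagonal `2`, or the first `2′`, which is the only `2′` of the row. Exchanging
the entry at such a position between `1` and `2` (on the diagonal) or `2′` (off it) leaves it a
boundary of the same kind, so each operator undoes the other. The exchange also keeps the
tableau conditions: the row stays weakly increasing, a new `2′` is the only one in its row, and
the entries below it are at least `2′`, as a `1` cannot sit below another `1`. -/

namespace List

variable {α : Type*}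

theorem IsChain.le_of_getElem? {β : Type*} [Preorder β] {f : α → β} {l : List α}
    (hl : l.IsChain (fun x y => f x ≤ f y)) {j k : ℕ} {x y : α} (hjk : j ≤ k)
    (hx : l[j]? = some x) (hy : l[k]? = some y) : f x ≤ f y := by
  obtain ⟨hj, rfl⟩ := getElem?_eq_some_iff.1 hx
  obtain ⟨hk, rfl⟩ := getElem?_eq_some_iff.1 hy
  rcases hjk.eq_or_lt with rfl | hlt
  · rfl
  have hsorted : l.Pairwise (fun x y => f x ≤ f y) :=
    pairwise_map.1 (isChain_iff_pairwise.1 ((isChain_map f).2 hl))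
  exact pairwise_iff_getElem.1 hsorted j k hj hk hlt

theorem IsChain.set {R : α → α → Prop} {l : List α} {i : ℕ} {a : α} (hl : l.IsChain R)
    (hleft : ∀ x, i ≠ 0 → l[i - 1]? = some x → R x a)
    (hright : ∀ y, l[i + 1]? = some y → R a y) : (l.set i a).IsChain R := by
  rw [isChain_iff_getElem] at hl ⊢
  intro k hk
  simp only [length_set] at hk
  simp only [getElem_set]
  split_ifs with h1 h2 h2
  · omega
  · subst h1; exact hright _ (getElem?_eq_getElem hk)
  · subst h2; exact hleft _ (by omega) (getElem?_eq_getElem (by omega))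
  · exact hl k hk

theorem eq_of_getElem?_eq_some_of_countP_le_one {l : List α} {p : α → Bool}
    (h : l.countP p ≤ 1) {j k : ℕ} {x y : α} (hx : l[j]? = some x) (hy : l[k]? = some y)
    (hpx : p x) (hpy : p y) : j = k := by
  wlog hjk : j < k generalizing j k x y
  · by_contra hne
    exact hne (this hy hx hpy hpx (by omega)).symm
  have htake : 0 < (l.take k).countP p :=
    countP_pos_iff.2 ⟨x, mem_of_getElem? (by rwa [getElem?_take, if_pos hjk]), hpx⟩
  have hdrop : 0 < (l.drop k).countP p :=
    countP_pos_iff.2 ⟨y, mem_of_getElem? (i := 0) (by rwa [getElem?_drop, Nat.add_zero]), hpy⟩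
  rw [← take_append_drop k l, countP_append] at h
  omega

theorem length_filter_eq_set_le_one [DecidableEq α] {l : List α} {i : ℕ} {a b : α}
    (hl : (l.filter (fun x => decide (x = b))).length ≤ 1) (ha : a = b → a ∉ l) :
    ((l.set i a).filter (fun x => decide (x = b))).length ≤ 1 := by
  rw [← countP_eq_length_filter] at hl ⊢
  by_cases hi : i < l.length
  · rw [countP_set hi]
    by_cases hab : a = b
    · subst hab
      have : l.countP (fun x => decide (x = a)) = 0 :=
        countP_eq_zero.2 fun x hx hxa => ha rfl (by simp only [decide_eq_true_eq] at hxa; rwa [← hxa])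
      simp [this]
    · simp only [hab, decide_false, Bool.false_eq_true, if_false]; omega
  · rwa [set_eq_of_length_le (by omega)]

theorem idxOf_eq_iff_getElem? [BEq α] [LawfulBEq α] {l : List α} {a : α} {i : ℕ}
    (h : a ∈ l) : l.idxOf a = i ↔ l[i]? = some a ∧ ∀ k < i, l[k]? ≠ some a := by
  by_cases hi : i < l.length
  · rw [idxOf, findIdx_eq hi]
    simp only [getElem?_eq_getElem hi, Option.some.injEq, beq_iff_eq, beq_eq_false_iff_ne]
    refine and_congr_right fun _ => ⟨fun H k hk => ?_, fun H k hk => ?_⟩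
    · rw [getElem?_eq_getElem (by omega)]; simpa using H k hk
    · simpa [getElem?_eq_getElem (by omega : k < l.length)] using H k hk
  · constructor
    · rintro rfl; exact absurd (idxOf_lt_length_of_mem h) hi
    · rintro ⟨h1, -⟩; exact absurd (getElem?_eq_some_iff.1 h1).1 hi

theorem length_sub_one_sub_idxOf_reverse_eq_iff [BEq α] [LawfulBEq α] {l : List α} {a : α}
    {i : ℕ} (h : a ∈ l) :
    l.length - 1 - l.reverse.idxOf a = i ↔ l[i]? = some a ∧ ∀ k, i < k → l[k]? ≠ some a := by
  have hj := idxOf_lt_length_of_mem (mem_reverse.2 h)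
  rw [length_reverse] at hj
  by_cases hi : i < l.length
  · have hrev : ∀ k, k < l.length → l.reverse[l.length - 1 - k]? = l[k]? := fun k hk => by
      rw [getElem?_reverse (by omega)]; congr 1; omega
    rw [show l.length - 1 - l.reverse.idxOf a = i ↔ l.reverse.idxOf a = l.length - 1 - i by omega,
      idxOf_eq_iff_getElem? (mem_reverse.2 h), hrev i hi]
    refine and_congr_right fun _ => ⟨fun H k hk => ?_, fun H k hk => ?_⟩
    · by_cases hkl : k < l.length
      · rw [← hrev k hkl]; exact H _ (by omega)
      · rw [getElem?_eq_none (by omega)]; simp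
    · rw [getElem?_reverse (by omega)]; exact H _ (by omega)
  · constructor
    · intro; omega
    · rintro ⟨h1, -⟩; exact absurd (getElem?_eq_some_iff.1 h1).1 hi

theorem set_set_of_getElem? {l : List α} {i : ℕ} {a : α} (h : l[i]? = some a) (b : α) :
    (l.set i b).set i a = l := by
  obtain ⟨hi, rfl⟩ := getElem?_eq_some_iff.1 h
  rw [set_set, set_getElem_self]

end List

@[simp] lemma pKey_one : pKey (1, false) = 2 := rfl
@[simp] lemma pKey_two_prime : pKey (2, true) = 3 := rfl
@[simp] lemma pKey_two : pKey (2, false) = 4 := rfl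

theorem pKey_eq_two_iff {x : ℕ × Bool} : pKey x = 2 ↔ x = (1, false) := by
  obtain ⟨v, b⟩ := x; cases b <;> simp [pKey]; omega

theorem pKey_eq_three_iff {x : ℕ × Bool} : pKey x = 3 ↔ x = (2, true) := by
  obtain ⟨v, b⟩ := x; cases b <;> simp [pKey] <;> omega

def oddLetter (i : ℕ) : ℕ × Bool := if i = 0 then (2, false) else (2, true)

@[simp] lemma oddLetter_zero : oddLetter 0 = (2, false) := rfl

@[simp] lemma oddLetter_fst (i : ℕ) : (oddLetter i).1 = 2 := by
  unfold oddLetter; split <;> rfl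

theorem oddLetter_of_ne_zero {i : ℕ} (hi : i ≠ 0) : oddLetter i = (2, true) := if_neg hi

theorem three_le_pKey_oddLetter (i : ℕ) : 3 ≤ pKey (oddLetter i) := by
  unfold oddLetter; split <;> simp

theorem pKey_oddLetter_le_four (i : ℕ) : pKey (oddLetter i) ≤ 4 := by
  unfold oddLetter; split <;> simp

def IsOneTwoBoundary (r : List (ℕ × Bool)) (i : ℕ) : Prop :=
  (∀ k x, k < i → r[k]? = some x → pKey x ≤ 2) ∧ ∀ k y, i < k → r[k]? = some y → 4 ≤ pKey y

namespace IsOneTwoBoundary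

variable {r : List (ℕ × Bool)} {i : ℕ}

theorem set (h : IsOneTwoBoundary r i) (a : ℕ × Bool) : IsOneTwoBoundary (r.set i a) i :=
  ⟨fun k x hk hx => h.1 k x hk (by rwa [List.getElem?_set_ne (by omega)] at hx),
    fun k y hk hy => h.2 k y hk (by rwa [List.getElem?_set_ne (by omega)] at hy)⟩

theorem isChain_set (h : IsOneTwoBoundary r i) (hr : r.IsChain (fun x y => pKey x ≤ pKey y))
    {a : ℕ × Bool} (h2 : 2 ≤ pKey a) (h4 : pKey a ≤ 4) :
    (r.set i a).IsChain (fun x y => pKey x ≤ pKey y) :=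
  hr.set (fun x hi hx => (h.1 _ x (by omega) hx).trans h2)
    (fun y hy => h4.trans (h.2 _ y (by omega) hy))

theorem eq_of_pKey_eq_three (h : IsOneTwoBoundary r i) {k : ℕ} {y : ℕ × Bool}
    (hk : r[k]? = some y) (hy : pKey y = 3) : k = i := by
  rcases lt_trichotomy k i with hlt | heq | hgt
  · have := h.1 k y hlt hk; omega
  · exact heq
  · have := h.2 k y hgt hk; omega

end IsOneTwoBoundary

theorem fOdd_cons_of_isOneTwoBoundary {r : List (ℕ × Bool)} {i : ℕ} (rest : PrimedTab)
    (hr : r[i]? = some (1, false)) (h : IsOneTwoBoundary r i) :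
    fOdd (r :: rest) = some (r.set i (oddLetter i) :: rest) := by
  have hmem : (1, false) ∈ r := List.mem_of_getElem? hr
  have hlast : r.length - 1 - r.reverse.idxOf (1, false) = i :=
    (List.length_sub_one_sub_idxOf_reverse_eq_iff hmem).2
      ⟨hr, fun k hk hk1 => by have := h.2 k _ hk hk1; simp at this⟩
  have hnext : r[i + 1]? ≠ some (2, true) := fun hc => by
    have := h.2 _ _ (Nat.lt_succ_self i) hc; simp at this
  simp only [fOdd, List.getD_cons_zero, if_pos hmem, hlast, if_neg hnext]
  rfl

theorem eOdd_cons_of_isOneTwoBoundary {r : List (ℕ × Bool)} {i : ℕ} (rest : PrimedTab)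
    (hr : r[i]? = some (oddLetter i)) (h : IsOneTwoBoundary r i) :
    eOdd (r :: rest) = some (r.set i (1, false) :: rest) := by
  rcases eq_or_ne i 0 with rfl | hi
  · rw [oddLetter_zero] at hr
    simp only [eOdd, List.getD_cons_zero, if_pos hr, List.set_cons_zero]
  rw [oddLetter_of_ne_zero hi] at hr
  have hfirst : r[0]? ≠ some (2, false) := fun hc => by
    have := h.1 0 _ (by omega) hc; simp at this
  have hmem : (2, true) ∈ r := List.mem_of_getElem? hr
  have hidx : r.idxOf (2, true) = i :=
    (List.idxOf_eq_iff_getElem? hmem).2 ⟨hr, fun k hk hk2 => by have := h.1 k _ hk hk2; simp at this⟩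
  simp only [eOdd, List.getD_cons_zero, if_neg hfirst, if_pos hmem, hidx, List.set_cons_zero]

namespace IsPrimedTab

variable {m : ℕ} {Q : PrimedTab} {r : List (ℕ × Bool)} {rest : PrimedTab} {i : ℕ}

theorem exists_getElem?_above (hQ : IsPrimedTab m Q) {i k : ℕ} {x : ℕ × Bool}
    (hx : (Q.getD (i + 1) [])[k]? = some x) : ∃ y, (Q.getD i [])[k + 1]? = some y := by
  have hi : i + 1 < Q.length := by
    by_contra hc
    rw [List.getD_eq_default _ _ (by omega)] at hx
    simp at hx
  have hlen := List.isChain_iff_getElem.1 hQ.2.1 i hi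
  rw [List.getD_eq_getElem _ _ hi] at hx
  rw [List.getD_eq_getElem _ _ (by omega)]
  exact ⟨_, List.getElem?_eq_getElem (by have := (List.getElem?_eq_some_iff.1 hx).1; omega)⟩

theorem isChain_head (hQ : IsPrimedTab m (r :: rest)) :
    r.IsChain (fun x y => pKey x ≤ pKey y) :=
  hQ.2.2.2.1 r List.mem_cons_self

theorem pKey_le_of_column (hQ : IsPrimedTab m Q) {p q c : ℕ} {x y : ℕ × Bool} (hpq : p ≤ q)
    (hc : q ≤ c) (hy : (Q.getD p [])[c - p]? = some y) (hx : (Q.getD q [])[c - q]? = some x) :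
    pKey y ≤ pKey x := by
  induction q, hpq using Nat.le_induction generalizing x with
  | base => rw [hy] at hx; cases hx; rfl
  | succ n hrn ih =>
    have hcn : c - (n + 1) + 1 = c - n := by omega
    obtain ⟨z, hz⟩ := hQ.exists_getElem?_above hx
    rw [hcn] at hz
    exact (ih (by omega) hz).trans (hQ.2.2.2.2.1 n _ x z hx (by rwa [hcn]))

theorem set_head_row (hQ : IsPrimedTab m (r :: rest)) {a : ℕ × Bool} (hi : i < r.length)
    (ha : 1 ≤ a.1 ∧ a.1 ≤ m) (hrow : (r.set i a).IsChain (fun x y => pKey x ≤ pKey y))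
    (hdiag : i = 0 → a.2 = false)
    (hcol : ∀ x, i ≠ 0 → (rest.getD 0 [])[i - 1]? = some x → pKey a ≤ pKey x)
    (hprime : a.2 = true → a ∉ r)
    (hunpr : a.2 = false → ∀ n, n + 1 ≤ i → (rest.getD n [])[i - (n + 1)]? ≠ some a) :
    IsPrimedTab m (r.set i a :: rest) := by
  obtain ⟨hne, hlen, hbd, hrows, hcols, hprimes, hunprs, hdiags⟩ := hQ
  have hget : ∀ k x, (r.set i a)[k]? = some x → k = i ∧ x = a ∨ k ≠ i ∧ r[k]? = some x := by
    intro k x hx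
    by_cases hk : k = i
    · subst hk; rw [List.getElem?_set_self hi, Option.some.injEq] at hx; exact .inl ⟨rfl, hx.symm⟩
    · rw [List.getElem?_set_ne (Ne.symm hk)] at hx; exact .inr ⟨hk, hx⟩
  refine ⟨?_, ?_, ?_, ?_, ?_, ?_, ?_, ?_⟩
  · rintro s (_ | ⟨_, hs⟩)
    · exact List.ne_nil_of_length_pos (by simp only [List.length_set]; omega)
    · exact hne s (List.mem_cons_of_mem _ hs)
  · cases rest with
    | nil => exact List.isChain_singleton _
    | cons s rest =>
      rw [List.Chain', List.isChain_cons_cons] at hlen ⊢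
      exact ⟨by simpa using hlen.1, hlen.2⟩
  · rintro s (_ | ⟨_, hs⟩) x hx
    · rcases List.mem_or_eq_of_mem_set hx with hx | rfl
      exacts [hbd _ List.mem_cons_self x hx, ha]
    · exact hbd s (List.mem_cons_of_mem _ hs) x hx
  · rintro s (_ | ⟨_, hs⟩)
    exacts [hrow, hrows s (List.mem_cons_of_mem _ hs)]
  · rintro (_ | i') k x y hx hy
    · rcases hget _ _ hy with ⟨rfl, rfl⟩ | ⟨-, hy⟩
      exacts [hcol x (by omega) hx, hcols 0 k x y hx hy]
    · exact hcols (i' + 1) k x y hx hy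
  · rintro s (_ | ⟨_, hs⟩) v
    · exact List.length_filter_eq_set_le_one (hprimes _ List.mem_cons_self v)
        fun hav => hprime (by rw [hav])
    · exact hprimes s (List.mem_cons_of_mem _ hs) v
  · rintro c (_ | r₁) (_ | r₂) v h₁₂ h₂c hx hy
    · omega
    · rcases hget _ _ hx with ⟨rfl, rfl⟩ | ⟨-, hx⟩
      exacts [hunpr rfl r₂ (by omega) hy, hunprs c 0 (r₂ + 1) v h₁₂ h₂c hx hy]
    · omega
    · exact hunprs c (r₁ + 1) (r₂ + 1) v h₁₂ h₂c hx hy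
  · rintro (_ | r') x hx
    · rcases hget _ _ hx with ⟨rfl, rfl⟩ | ⟨-, hx⟩
      exacts [hdiag rfl, hdiags 0 x hx]
    · exact hdiags (r' + 1) x hx

theorem exists_of_fOdd_eq_some {T S : PrimedTab} (hT : IsPrimedTab m T) (h : fOdd T = some S) :
    ∃ r rest i, T = r :: rest ∧ r[i]? = some (1, false) ∧ IsOneTwoBoundary r i ∧
      S = r.set i (oddLetter i) :: rest := by
  obtain _ | ⟨r, rest⟩ := T
  · simp [fOdd] at h
  have hrow := hT.isChain_head
  simp only [fOdd, List.getD_cons_zero] at h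
  by_cases hmem : (1, false) ∈ r
  swap
  · rw [if_neg hmem] at h; cases h
  generalize hidef : r.length - 1 - r.reverse.idxOf (1, false) = i at h
  obtain ⟨hr, hright⟩ := (List.length_sub_one_sub_idxOf_reverse_eq_iff hmem).1 hidef
  by_cases hnext : r[i + 1]? = some (2, true)
  · rw [if_pos hmem, if_pos hnext] at h; cases h
  rw [if_pos hmem, if_neg hnext] at h
  refine ⟨r, rest, i, rfl, hr, ⟨fun k x hk hx => ?_, fun k y hk hy => ?_⟩, ?_⟩
  · simpa using hrow.le_of_getElem? hk.le hx hr
  · obtain ⟨z, hz⟩ : ∃ z, r[i + 1]? = some z :=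
      ⟨_, List.getElem?_eq_getElem (by have := (List.getElem?_eq_some_iff.1 hy).1; omega)⟩
    have h2 : 2 ≤ pKey z := by simpa using hrow.le_of_getElem? (Nat.le_succ i) hr hz
    have hz2 : pKey z ≠ 2 := fun e =>
      hright (i + 1) (by omega) (by rwa [pKey_eq_two_iff.1 e] at hz)
    have hz3 : pKey z ≠ 3 := fun e => hnext (by rwa [pKey_eq_three_iff.1 e] at hz)
    have := hrow.le_of_getElem? (by omega : i + 1 ≤ k) hz hy
    omega
  · rw [← Option.some.inj h]
    rfl

theorem exists_of_eOdd_eq_some {S T : PrimedTab} (hS : IsPrimedTab m S) (h : eOdd S = some T) :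
    ∃ r rest i, S = r :: rest ∧ r[i]? = some (oddLetter i) ∧ IsOneTwoBoundary r i ∧
      T = r.set i (1, false) :: rest := by
  obtain _ | ⟨r, rest⟩ := S
  · simp [eOdd] at h
  obtain ⟨-, -, -, hrows, -, hprimes, -, hdiag⟩ := hS
  have hrow := hrows r List.mem_cons_self
  simp only [eOdd, List.getD_cons_zero, List.set_cons_zero] at h
  split_ifs at h with h0 hmem
  · refine ⟨r, rest, 0, rfl, h0, ⟨fun k x hk => absurd hk (Nat.not_lt_zero k),
      fun k y hk hy => ?_⟩, (Option.some.inj h).symm⟩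
    simpa using hrow.le_of_getElem? (Nat.zero_le k) h0 hy
  · generalize hjdef : r.idxOf (2, true) = j at h
    obtain ⟨hj, hleft⟩ := (List.idxOf_eq_iff_getElem? hmem).1 hjdef
    have hj0 : j ≠ 0 := fun hj0 => by
      rw [hj0] at hj
      simpa using hdiag 0 _ hj
    refine ⟨r, rest, j, rfl, by rwa [oddLetter_of_ne_zero hj0],
      ⟨fun k x hk hx => ?_, fun k y hk hy => ?_⟩, (Option.some.inj h).symm⟩
    · have h3 : pKey x ≤ 3 := by simpa using hrow.le_of_getElem? hk.le hx hj
      have hx3 : pKey x ≠ 3 := fun e => hleft k hk (by rwa [pKey_eq_three_iff.1 e] at hx)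
      omega
    · have h3 : 3 ≤ pKey y := by simpa using hrow.le_of_getElem? hk.le hj hy
      have hy3 : pKey y ≠ 3 := fun e => by
        have hprime := hprimes r List.mem_cons_self 2
        rw [← List.countP_eq_length_filter] at hprime
        have := List.eq_of_getElem?_eq_some_of_countP_le_one hprime hj hy (by simp)
          (by simp [pKey_eq_three_iff.1 e])
        omega
      omega

theorem set_oddLetter (hT : IsPrimedTab m (r :: rest)) (hm : 2 ≤ m)
    (hr : r[i]? = some (1, false)) (h : IsOneTwoBoundary r i) :
    IsPrimedTab m (r.set i (oddLetter i) :: rest) := by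
  have hi : i < r.length := (List.getElem?_eq_some_iff.1 hr).1
  have ⟨_, _, _, _, hcols, _, hunprs, _⟩ := hT
  refine hT.set_head_row hi ⟨by simp, by simpa using hm⟩
    (h.isChain_set hT.isChain_head (by have := three_le_pKey_oddLetter i; omega)
      (pKey_oddLetter_le_four i)) (by rintro rfl; rfl) ?_ ?_ ?_
  · intro x hi0 hx
    have hr' : ((r :: rest).getD 0 [])[i - 1 + 1]? = some (1, false) := by
      rwa [Nat.sub_add_cancel (Nat.one_le_iff_ne_zero.2 hi0)]
    have h2 : 2 ≤ pKey x := by simpa using hcols 0 (i - 1) x _ (by simpa using hx) hr'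
    have hx1 : x ≠ (1, false) := by
      rintro rfl
      exact hunprs i 0 1 1 (by omega) (by omega) (by simpa using hr) (by simpa using hx)
    have : pKey x ≠ 2 := fun e => hx1 (pKey_eq_two_iff.1 e)
    rw [oddLetter_of_ne_zero hi0]
    simp only [pKey_two_prime]
    omega
  · intro hprimed hmem
    obtain ⟨k, hk⟩ := List.mem_iff_getElem?.1 hmem
    have hi0 : i ≠ 0 := by rintro rfl; simp at hprimed
    rw [oddLetter_of_ne_zero hi0] at hk
    obtain rfl := h.eq_of_pKey_eq_three hk rfl
    simp [hr] at hk
  · intro hunprimed n hn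
    rw [oddLetter_of_ne_zero (by omega)] at hunprimed
    simp at hunprimed

theorem set_one (hT : IsPrimedTab m (r :: rest)) (hr : r[i]? = some (oddLetter i))
    (h : IsOneTwoBoundary r i) : IsPrimedTab m (r.set i (1, false) :: rest) := by
  have hi : i < r.length := (List.getElem?_eq_some_iff.1 hr).1
  have ⟨_, _, hbd, _, hcols, _, _, _⟩ := hT
  have hm : 2 ≤ m := by simpa using (hbd r List.mem_cons_self _ (List.mem_of_getElem? hr)).2
  have h3 := three_le_pKey_oddLetter i
  refine hT.set_head_row hi ⟨le_rfl, by omega⟩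
    (h.isChain_set hT.isChain_head (by simp) (by simp)) (fun _ => rfl) ?_
    (by simp) ?_
  · intro x hi0 hx
    have hr' : ((r :: rest).getD 0 [])[i - 1 + 1]? = some (oddLetter i) := by
      rwa [Nat.sub_add_cancel (Nat.one_le_iff_ne_zero.2 hi0)]
    have := hcols 0 (i - 1) x _ (by simpa using hx) hr'
    simp only [pKey_one]
    omega
  · intro _ n hn hx
    have := hT.pKey_le_of_column (Nat.zero_le (n + 1)) hn (by simpa using hr) (by simpa using hx)
    simp only [pKey_one] at this
    omega

end IsPrimedTab

/-- The odd operators `f̃₁′` and `ẽ₁′` on `PT_m(λ)` are well defined (their values are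
again primed tableaux) and are mutually inverse partial operators:
`f̃₁′(T) = S ↔ ẽ₁′(S) = T`. -/
theorem odd_operators_well_defined_and_inverse (m : ℕ) (hm : 2 ≤ m)
    (S T : PrimedTab) (hS : IsPrimedTab m S) (hT : IsPrimedTab m T) :
    (∀ U, fOdd T = some U → IsPrimedTab m U) ∧
    (∀ U, eOdd T = some U → IsPrimedTab m U) ∧
    (fOdd T = some S ↔ eOdd S = some T) := by
  refine ⟨fun U hU => ?_, fun U hU => ?_, fun h => ?_, fun h => ?_⟩
  · obtain ⟨r, rest, i, rfl, hr, hb, rfl⟩ := hT.exists_of_fOdd_eq_some hU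
    exact hT.set_oddLetter hm hr hb
  · obtain ⟨r, rest, i, rfl, hr, hb, rfl⟩ := hT.exists_of_eOdd_eq_some hU
    exact hT.set_one hr hb
  · obtain ⟨r, rest, i, rfl, hr, hb, rfl⟩ := hT.exists_of_fOdd_eq_some h
    have hi : i < r.length := (List.getElem?_eq_some_iff.1 hr).1
    rw [eOdd_cons_of_isOneTwoBoundary rest (List.getElem?_set_self hi) (hb.set _),
      List.set_set_of_getElem? hr]
  · obtain ⟨r, rest, i, rfl, hr, hb, rfl⟩ := hS.exists_of_eOdd_eq_some h
    have hi : i < r.length := (List.getElem?_eq_some_iff.1 hr).1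
    rw [fOdd_cons_of_isOneTwoBoundary rest (List.getElem?_set_self hi) (hb.set _),
      List.set_set_of_getElem? hr]
end
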